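/- For any fixed x ∈ ℝ and b > 0, lim_{N→∞} (1/N)·log( x·Φ(√N·x/b) + (b/√(2πN))·e^{-N x²/(2b²)} ) = -(min(x,0))²/(2b²). -/

import Mathlib

/-!
Let `φ` be the standard Gaussian density and
`G(y) = y Φ(y) + φ(y) = ∫_{s ≤ y} (y - s) φ(s) ds`. With `t = √N / b` the argument of the
logarithm is exactly `G(t x) / t`, and `N = (b t)²`.
For `x > 0`, `G(t x) / t` stays between two positive constants. For `x ≤ 0`,
`φ(t x - 2) ≤ G(t x) ≤ φ(t x)`, the lower bound coming from the mass of `(y - s) φ(s)` on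
`(y - 2, y - 1]`; both bounds are `exp(-t² x² / 2 + O(t))`.
-/

open MeasureTheory ProbabilityTheory Real Set Filter Topology

noncomputable def stdGaussianCDF (x : ℝ) : ℝ :=
  ((gaussianReal 0 1) (Set.Iic x)).toReal

noncomputable def stdGaussianPDF (t : ℝ) : ℝ := (√(2 * π))⁻¹ * exp (-t ^ 2 / 2)

lemma gaussianPDFReal_zero_one : gaussianPDFReal 0 1 = stdGaussianPDF := by
  ext t
  simp [gaussianPDFReal, stdGaussianPDF]

lemma stdGaussianPDF_pos (t : ℝ) : 0 < stdGaussianPDF t := by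
  unfold stdGaussianPDF
  positivity

lemma stdGaussianPDF_le_of_sq_le {s t : ℝ} (h : s ^ 2 ≤ t ^ 2) :
    stdGaussianPDF t ≤ stdGaussianPDF s := by
  unfold stdGaussianPDF
  gcongr

lemma log_stdGaussianPDF (t : ℝ) : log (stdGaussianPDF t) = -log √(2 * π) - t ^ 2 / 2 := by
  rw [stdGaussianPDF, log_mul (by positivity) (exp_pos _).ne', log_inv, log_exp]
  ring

lemma hasDerivAt_stdGaussianPDF (t : ℝ) :
    HasDerivAt stdGaussianPDF (-t * stdGaussianPDF t) t := by
  have h : HasDerivAt (fun s : ℝ => -s ^ 2 / 2) (-t) t :=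
    ((hasDerivAt_pow 2 t).neg.div_const 2).congr_deriv (by push_cast; ring)
  exact (h.exp.const_mul (√(2 * π))⁻¹).congr_deriv (by unfold stdGaussianPDF; ring)

lemma tendsto_stdGaussianPDF_atBot : Tendsto stdGaussianPDF atBot (𝓝 0) := by
  have hsq : Tendsto (fun t : ℝ => -t ^ 2 / 2) atBot atBot := by
    simpa [sq] using (tendsto_neg_atTop_atBot.comp
      (tendsto_id.atBot_mul_atBot₀ tendsto_id)).atBot_div_const two_pos
  have h := (tendsto_exp_atBot.comp hsq).const_mul (√(2 * π))⁻¹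
  rw [mul_zero] at h
  exact h

lemma integrable_stdGaussianPDF : Integrable stdGaussianPDF := by
  simpa [gaussianPDFReal_zero_one] using integrable_gaussianPDFReal 0 1

lemma integrable_mul_stdGaussianPDF : Integrable fun t => t * stdGaussianPDF t := by
  refine ((integrable_mul_exp_neg_mul_sq (b := 1 / 2) one_half_pos).const_mul
    (√(2 * π))⁻¹).congr (ae_of_all _ fun t => ?_)
  simp only [stdGaussianPDF]
  ring_nf

lemma integral_Iic_neg_mul_stdGaussianPDF (u : ℝ) :
    ∫ t in Iic u, -t * stdGaussianPDF t = stdGaussianPDF u := by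
  simpa using integral_Iic_of_hasDerivAt_of_tendsto' (fun t _ => hasDerivAt_stdGaussianPDF t)
    (by simpa using integrable_mul_stdGaussianPDF.neg.integrableOn) tendsto_stdGaussianPDF_atBot

lemma stdGaussianCDF_eq_integral (y : ℝ) :
    stdGaussianCDF y = ∫ t in Iic y, stdGaussianPDF t := by
  rw [stdGaussianCDF, gaussianReal_apply_eq_integral 0 one_ne_zero, gaussianPDFReal_zero_one,
    ENNReal.toReal_ofReal
      (setIntegral_nonneg measurableSet_Iic fun t _ => (stdGaussianPDF_pos t).le)]

lemma stdGaussianCDF_le_one (y : ℝ) : stdGaussianCDF y ≤ 1 :=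
  ENNReal.toReal_le_of_le_ofReal zero_le_one (by simpa using prob_le_one)

lemma stdGaussianCDF_mono : Monotone stdGaussianCDF := fun _ _ h =>
  ENNReal.toReal_mono (measure_ne_top _ _) (measure_mono (Iic_subset_Iic.2 h))

lemma stdGaussianCDF_pos (y : ℝ) : 0 < stdGaussianCDF y := by
  refine ENNReal.toReal_pos (fun h => ?_) (measure_ne_top _ _)
  simpa using gaussianReal_absolutelyContinuous' 0 one_ne_zero h

noncomputable def stdGaussianIntegratedCDF (y : ℝ) : ℝ :=
  y * stdGaussianCDF y + stdGaussianPDF y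

lemma stdGaussianIntegratedCDF_eq_integral (y : ℝ) :
    stdGaussianIntegratedCDF y = ∫ t in Iic y, (y - t) * stdGaussianPDF t := by
  have hconst : IntegrableOn (fun t => y * stdGaussianPDF t) (Iic y) :=
    (integrable_stdGaussianPDF.const_mul y).integrableOn
  have hlin : IntegrableOn (fun t => -t * stdGaussianPDF t) (Iic y) := by
    simpa using integrable_mul_stdGaussianPDF.neg.integrableOn
  simp_rw [sub_mul, sub_eq_add_neg, ← neg_mul]
  rw [integral_add hconst hlin, integral_const_mul, integral_Iic_neg_mul_stdGaussianPDF,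
    ← stdGaussianCDF_eq_integral, stdGaussianIntegratedCDF]

lemma stdGaussianIntegratedCDF_le_stdGaussianPDF {y : ℝ} (hy : y ≤ 0) :
    stdGaussianIntegratedCDF y ≤ stdGaussianPDF y :=
  add_le_of_nonpos_left (mul_nonpos_of_nonpos_of_nonneg hy (stdGaussianCDF_pos y).le)

lemma stdGaussianPDF_sub_two_le_stdGaussianIntegratedCDF {y : ℝ} (hy : y ≤ 0) :
    stdGaussianPDF (y - 2) ≤ stdGaussianIntegratedCDF y := by
  have hint : Integrable fun t => (y - t) * stdGaussianPDF t :=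
    ((integrable_stdGaussianPDF.const_mul y).sub integrable_mul_stdGaussianPDF).congr
      (ae_of_all _ fun t => by simp only [Pi.sub_apply]; ring)
  calc stdGaussianPDF (y - 2) = ∫ _ in Ioc (y - 2) (y - 1), stdGaussianPDF (y - 2) := by
        simp [volume_real_Ioc]
        norm_num
    _ ≤ ∫ t in Ioc (y - 2) (y - 1), (y - t) * stdGaussianPDF t := by
        refine setIntegral_mono_on (integrableOn_const (by simp)) hint.integrableOn
          measurableSet_Ioc fun t ⟨ht₁, ht₂⟩ => ?_
        calc stdGaussianPDF (y - 2) ≤ stdGaussianPDF t :=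
              stdGaussianPDF_le_of_sq_le (by nlinarith)
          _ ≤ (y - t) * stdGaussianPDF t :=
              le_mul_of_one_le_left (stdGaussianPDF_pos t).le (by linarith)
    _ ≤ ∫ t in Iic y, (y - t) * stdGaussianPDF t := by
        refine setIntegral_mono_set hint.integrableOn ?_ ?_
        · filter_upwards [ae_restrict_mem measurableSet_Iic] with t (ht : t ≤ y)
          exact mul_nonneg (by linarith) (stdGaussianPDF_pos t).le
        · exact Eventually.of_forall fun t (ht : t ∈ Ioc (y - 2) (y - 1)) =>
            (show t ≤ y by linarith [ht.2])
    _ = stdGaussianIntegratedCDF y := (stdGaussianIntegratedCDF_eq_integral y).symm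

lemma stdGaussianIntegratedCDF_mul_div {t : ℝ} (ht : t ≠ 0) (x : ℝ) :
    stdGaussianIntegratedCDF (t * x) / t =
      x * stdGaussianCDF (t * x) + stdGaussianPDF (t * x) / t := by
  rw [stdGaussianIntegratedCDF]
  field_simp

lemma stdGaussianIntegratedCDF_mul_div_mem_Icc {t x : ℝ} (ht : 1 ≤ t) (hx : 0 ≤ x) :
    stdGaussianIntegratedCDF (t * x) / t ∈
      Icc (x * stdGaussianCDF 0) (x + stdGaussianPDF 0) := by
  have htx : 0 ≤ t * x := by positivity
  have hpdf : 0 ≤ stdGaussianPDF (t * x) := (stdGaussianPDF_pos _).le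
  rw [stdGaussianIntegratedCDF_mul_div (by positivity)]
  constructor
  · have hcdf := mul_le_mul_of_nonneg_left (stdGaussianCDF_mono htx) hx
    have hpdf_div : 0 ≤ stdGaussianPDF (t * x) / t := by positivity
    linarith
  · have hcdf := mul_le_mul_of_nonneg_left (stdGaussianCDF_le_one (t * x)) hx
    have hpdf_div : stdGaussianPDF (t * x) / t ≤ stdGaussianPDF 0 :=
      (div_le_self hpdf ht).trans (stdGaussianPDF_le_of_sq_le (by simp [sq_nonneg]))
    linarith

lemma tendsto_quadratic_sub_log_div_sq (a b c : ℝ) :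
    Tendsto (fun t => (a * t ^ 2 + b * t + c - log t) / t ^ 2) atTop (𝓝 a) := by
  have hinv := tendsto_inv_atTop_zero (𝕜 := ℝ)
  have hlog : Tendsto (fun t => log t / t) atTop (𝓝 0) :=
    isLittleO_log_id_atTop.tendsto_div_nhds_zero
  have h := ((tendsto_const_nhds (x := a)).add (hinv.const_mul b) |>.add
    ((hinv.pow 2).const_mul c)).sub (hlog.mul hinv)
  simp only [mul_zero, add_zero, sub_zero, ne_eq, OfNat.ofNat_ne_zero, not_false_eq_true,
    zero_pow] at h
  refine h.congr' ?_
  filter_upwards [eventually_gt_atTop 0] with t ht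
  field_simp

lemma tendsto_log_stdGaussianIntegratedCDF_mul_div_of_nonpos {x : ℝ} (hx : x ≤ 0) :
    Tendsto (fun t => log (stdGaussianIntegratedCDF (t * x) / t) / t ^ 2) atTop
      (𝓝 (-x ^ 2 / 2)) := by
  set c := -log √(2 * π)
  refine tendsto_of_tendsto_of_tendsto_of_le_of_le'
    (tendsto_quadratic_sub_log_div_sq (-x ^ 2 / 2) (2 * x) (c - 2))
    (tendsto_quadratic_sub_log_div_sq (-x ^ 2 / 2) 0 c) ?_ ?_
  all_goals
    filter_upwards [eventually_gt_atTop 0] with t ht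
    have hy : t * x ≤ 0 := mul_nonpos_of_nonneg_of_nonpos ht.le hx
    have hlower := stdGaussianPDF_sub_two_le_stdGaussianIntegratedCDF hy
    rw [log_div ((stdGaussianPDF_pos _).trans_le hlower).ne' ht.ne']
    gcongr ?_ / _
  · have h := log_le_log (stdGaussianPDF_pos _) hlower
    rw [log_stdGaussianPDF] at h
    linear_combination h
  · have h := log_le_log ((stdGaussianPDF_pos _).trans_le hlower)
      (stdGaussianIntegratedCDF_le_stdGaussianPDF hy)
    rw [log_stdGaussianPDF] at h
    linear_combination h

lemma tendsto_log_stdGaussianIntegratedCDF_mul_div_of_pos {x : ℝ} (hx : 0 < x) :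
    Tendsto (fun t => log (stdGaussianIntegratedCDF (t * x) / t) / t ^ 2) atTop (𝓝 0) := by
  have hsq : Tendsto (fun t : ℝ => t ^ 2) atTop atTop := tendsto_pow_atTop two_ne_zero
  have hpos : 0 < x * stdGaussianCDF 0 := mul_pos hx (stdGaussianCDF_pos 0)
  refine tendsto_of_tendsto_of_tendsto_of_le_of_le'
    (tendsto_const_nhds (x := log (x * stdGaussianCDF 0)) |>.div_atTop hsq)
    (tendsto_const_nhds (x := log (x + stdGaussianPDF 0)) |>.div_atTop hsq) ?_ ?_
  all_goals
    filter_upwards [eventually_ge_atTop 1] with t ht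
    obtain ⟨hlo, hhi⟩ := stdGaussianIntegratedCDF_mul_div_mem_Icc ht hx.le
    gcongr ?_ / _
  · exact log_le_log hpos hlo
  · exact log_le_log (hpos.trans_le hlo) hhi

theorem tendsto_log_stdGaussianIntegratedCDF_mul_div (x : ℝ) :
    Tendsto (fun t => log (stdGaussianIntegratedCDF (t * x) / t) / t ^ 2) atTop
      (𝓝 (-(min x 0) ^ 2 / 2)) := by
  rcases le_or_gt x 0 with hx | hx
  · simpa [min_eq_left hx] using tendsto_log_stdGaussianIntegratedCDF_mul_div_of_nonpos hx
  · simpa [min_eq_right hx.le] using tendsto_log_stdGaussianIntegratedCDF_mul_div_of_pos hx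

/-- For fixed `x ∈ ℝ` and `b > 0`,
    `lim_{N→∞} (1/N) log( x Φ(√N x/b) + (b/√(2πN)) exp(-N x²/(2b²)) )
      = -(min(x,0))²/(2b²)`. -/
theorem gaussian_tail_log_limit (x b : ℝ) (hb : 0 < b) :
    Tendsto (fun N : ℕ => (1 / (N : ℝ)) * Real.log
        (x * stdGaussianCDF (Real.sqrt N * x / b)
          + (b / Real.sqrt (2 * π * N)) * Real.exp (-((N : ℝ) * x ^ 2) / (2 * b ^ 2))))
      atTop (nhds (-(min x 0) ^ 2 / (2 * b ^ 2))) := by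
  have hscale : Tendsto (fun N : ℕ => √N / b) atTop atTop :=
    (tendsto_sqrt_atTop.comp tendsto_natCast_atTop_atTop).atTop_div_const hb
  have h := ((tendsto_log_stdGaussianIntegratedCDF_mul_div x).comp hscale).div_const (b ^ 2)
  rw [show -(min x 0) ^ 2 / (2 * b ^ 2) = -(min x 0) ^ 2 / 2 / b ^ 2 by ring]
  refine h.congr' ?_
  filter_upwards [eventually_gt_atTop 0] with N hN
  have hN : (0 : ℝ) < N := Nat.cast_pos.2 hN
  have hsq : (√N / b) ^ 2 = N / b ^ 2 := by rw [div_pow, sq_sqrt hN.le]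
  have harg : √N / b * x = √N * x / b := by ring
  have hpdf : stdGaussianPDF (√N / b * x) / (√N / b) =
      b / √(2 * π * N) * exp (-(N * x ^ 2) / (2 * b ^ 2)) := by
    rw [stdGaussianPDF, sqrt_mul (by positivity : (0 : ℝ) ≤ 2 * π), mul_pow, hsq]
    field_simp
  simp only [Function.comp_apply]
  rw [stdGaussianIntegratedCDF_mul_div (by positivity), hpdf, harg, hsq]
  field_simp
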